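/- Let A be an s×t matrix over an alphabet Γ and let S be an n×t matrix over Γ (so a copy of A in S is determined by a strictly increasing choice of s rows of S, the column map being the identity on the t columns, and two copies are disjoint if and only if their row sets are disjoint). If S contains at least K copies of A, then S contains at least K/(s·n^{s-1}) pairwise-disjoint copies of A. -/

import Mathlib

/-- `(r, c)` is a copy of the `s × t` matrix `A` inside the `m × n` matrix `M`. -/
def IsCopy {Γ : Type*} {s t m n : ℕ} (A : Fin s → Fin t → Γ) (M : Fin m → Fin n → Γ)
    (r : Fin s → Fin m) (c : Fin t → Fin n) : Prop :=
  StrictMono r ∧ StrictMono c ∧ ∀ i j, M (r i) (c j) = A i j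

/-- The number of copies of `A` in `M`. -/
noncomputable def copyCount {Γ : Type*} {s t m n : ℕ} (A : Fin s → Fin t → Γ)
    (M : Fin m → Fin n → Γ) : ℕ :=
  Set.ncard {p : (Fin s → Fin m) × (Fin t → Fin n) | IsCopy A M p.1 p.2}

/-!
A copy of `A` in the strip `S` is a strictly increasing tuple of `s` rows. Two copies conflict
when their row sets meet. A copy conflicts with at most `s · n^(s-1)` copies: choose which of
its rows is shared, and a strictly increasing tuple through a given row is determined by the set
of its other `s - 1` rows. A maximum family of pairwise non-conflicting copies conflicts with
every copy, so its conflict sets cover all (at least `K`) copies.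
-/

open Finset

namespace Finset

variable {α : Type*} {P : α → α → Prop} [DecidableRel P] [Std.Symm P]

theorem exists_pairwise_subset_card_le_mul {C : Finset α} (hirrefl : ∀ x ∈ C, ¬ P x x)
    {Δ : ℕ} (hΔ : ∀ y ∈ C, #{x ∈ C | ¬ P x y} ≤ Δ) :
    ∃ D ⊆ C, (D : Set α).Pairwise P ∧ #C ≤ #D * Δ := by
  classical
  obtain ⟨D, hD, hmax⟩ := exists_max_image
    (C.powerset.filter fun E : Finset α => (E : Set α).Pairwise P) card ⟨∅, by simp⟩
  rw [mem_filter, mem_powerset] at hD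
  have hcover : C ⊆ D.biUnion fun y => {x ∈ C | ¬ P x y} := by
    intro x hx
    by_contra hx'
    simp only [mem_biUnion, mem_filter, not_exists, not_and, hx, true_and, not_not] at hx'
    have hxD : x ∉ D := fun h => hirrefl x hx (hx' x h)
    have hins : insert x D ∈ C.powerset.filter fun E : Finset α => (E : Set α).Pairwise P := by
      rw [mem_filter, mem_powerset, coe_insert, Set.pairwise_insert_of_symm_of_notMem hxD]
      exact ⟨insert_subset hx hD.1, hD.2, hx'⟩
    have := hmax _ hins
    rw [card_insert_of_notMem hxD] at this
    omega
  exact ⟨D, hD.1, hD.2, (card_le_card hcover).trans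
    (card_biUnion_le_card_mul D _ Δ fun y hy => hΔ y (hD.1 hy))⟩

end Finset

section StrictMono

variable {β : Type*} [LinearOrder β] [Fintype β] {k : ℕ}

theorem card_strictMono_mem_range_le (b : β) :
    #{r : Fin k → β | StrictMono r ∧ b ∈ Set.range r} ≤ Fintype.card β ^ (k - 1) := by
  calc #{r : Fin k → β | StrictMono r ∧ b ∈ Set.range r}
      ≤ #(powersetCard (k - 1) (univ : Finset β)) := by
        refine card_le_card_of_injOn (fun r => (univ.image r).erase b) ?_ ?_
        · intro r hr
          simp only [coe_filter, mem_univ, true_and, Set.mem_ofPred_eq] at hr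
          rw [mem_coe, mem_powersetCard, card_erase_of_mem (by simpa using hr.2),
            card_image_of_injective _ hr.1.injective]
          exact ⟨subset_univ _, by simp⟩
        · intro r hr r' hr' h
          dsimp only at h
          simp only [coe_filter, mem_univ, true_and, Set.mem_ofPred_eq] at hr hr'
          have himage : univ.image r = univ.image r' := by
            rw [← insert_erase (s := univ.image r) (by simpa using hr.2), h,
              insert_erase (by simpa using hr'.2)]
          refine (hr.1.range_inj hr'.1).1 ?_
          simpa using congrArg (fun s : Finset β => (s : Set β)) himage
    _ = (Fintype.card β).choose (k - 1) := by rw [card_powersetCard, card_univ]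
    _ ≤ Fintype.card β ^ (k - 1) := Nat.choose_le_pow _ _

open Classical in
theorem card_strictMono_not_disjoint_range_le {ι : Type*} [Fintype ι] (d : ι → β) :
    #{r : Fin k → β | StrictMono r ∧ ¬ Disjoint (Set.range r) (Set.range d)}
      ≤ Fintype.card ι * Fintype.card β ^ (k - 1) := by
  have hcover : ({r : Fin k → β | StrictMono r ∧ ¬ Disjoint (Set.range r) (Set.range d)} :
      Finset (Fin k → β)) ⊆
        univ.biUnion fun j => {r : Fin k → β | StrictMono r ∧ d j ∈ Set.range r} := by
    intro r hr
    simp only [mem_filter, mem_univ, true_and, Set.not_disjoint_iff] at hr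
    obtain ⟨hr, _, hx, j, rfl⟩ := hr
    simp only [mem_biUnion, mem_filter, mem_univ, true_and]
    exact ⟨j, hr, hx⟩
  simpa using (card_le_card hcover).trans
    (card_biUnion_le_card_mul _ _ _ fun j _ => card_strictMono_mem_range_le (d j))

end StrictMono

section RowCopies

variable {Γ : Type*} {s t n : ℕ} (A : Fin s → Fin t → Γ) (S : Fin n → Fin t → Γ)

open Classical in
noncomputable def rowCopies : Finset (Fin s → Fin n) :=
  {r | StrictMono r ∧ ∀ i j, S (r i) j = A i j}

variable {A S} in
theorem mem_rowCopies {r : Fin s → Fin n} :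
    r ∈ rowCopies A S ↔ StrictMono r ∧ ∀ i j, S (r i) j = A i j := by
  simp [rowCopies]

/-- The column map of a copy in a matrix with exactly `t` columns is forced to be the identity. -/
theorem copyCount_eq_card_rowCopies : copyCount A S = #(rowCopies A S) := by
  have hcopies : {p : (Fin s → Fin n) × (Fin t → Fin t) | IsCopy A S p.1 p.2}
      = (fun r => (r, id)) '' ↑(rowCopies A S) := by
    ext ⟨r, c⟩
    simp only [IsCopy, Set.mem_ofPred_eq, Set.mem_image, mem_coe, mem_rowCopies, Prod.mk.injEq]
    constructor
    · rintro ⟨hr, hc, hM⟩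
      obtain rfl := hc.eq_id
      exact ⟨r, ⟨hr, hM⟩, rfl, rfl⟩
    · rintro ⟨r, ⟨hr, hM⟩, rfl, rfl⟩
      exact ⟨hr, strictMono_id, hM⟩
  rw [copyCount, hcopies, Set.ncard_image_of_injective _ fun _ _ h => (Prod.ext_iff.1 h).1,
    Set.ncard_coe_finset]

end RowCopies

/-- Let `A` be an `s × t` matrix over `Γ` and `S` an `n × t` matrix over
`Γ`; a copy of `A` in `S` is given by a strictly increasing choice of `s` rows (the column
map being the identity), and copies are disjoint iff their row sets are disjoint. If `S`
contains at least `K` copies of `A`, then it contains at least `K/(s·n^(s-1))`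
pairwise-disjoint copies of `A`. -/
theorem disjoint_copies_in_strip {Γ : Type*} {s t n : ℕ}
    (A : Fin s → Fin t → Γ) (S : Fin n → Fin t → Γ) (K : ℝ)
    (hK : K ≤ (copyCount A S : ℝ)) :
    ∃ D : Finset (Fin s → Fin n),
      (∀ r ∈ D, StrictMono r ∧ ∀ i j, S (r i) j = A i j) ∧
      ((D : Set (Fin s → Fin n)).Pairwise
        fun r r' => Disjoint (Set.range r) (Set.range r')) ∧
      K / ((s : ℝ) * (n : ℝ) ^ (s - 1)) ≤ (D.card : ℝ) := by
  classical
  rcases Nat.eq_zero_or_pos s with rfl | hs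
  · exact ⟨∅, by simp, by simp, by simp⟩
  have : Std.Symm fun r r' : Fin s → Fin n => Disjoint (Set.range r) (Set.range r') :=
    ⟨fun _ _ h => h.symm⟩
  have hself (r : Fin s → Fin n) : ¬ Disjoint (Set.range r) (Set.range r) :=
    Set.not_disjoint_iff.2 ⟨r ⟨0, hs⟩, ⟨_, rfl⟩, ⟨_, rfl⟩⟩
  have hconflicts (d : Fin s → Fin n) :
      #{r ∈ rowCopies A S | ¬ Disjoint (Set.range r) (Set.range d)} ≤ s * n ^ (s - 1) := by
    refine (card_le_card fun r hr => ?_).trans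
      (by simpa using card_strictMono_not_disjoint_range_le (k := s) d)
    simp_all [mem_rowCopies]
  obtain ⟨D, hDC, hD, hcard⟩ :=
    exists_pairwise_subset_card_le_mul (fun r _ => hself r) fun d _ => hconflicts d
  refine ⟨D, fun r hr => mem_rowCopies.1 (hDC hr), hD, div_le_of_le_mul₀ (by positivity)
    (by positivity) ?_⟩
  rw [copyCount_eq_card_rowCopies] at hK
  exact hK.trans (by exact_mod_cast hcard)
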